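/- For a σ-Dedekind complete Banach lattice E with the wDP* property, every continuous linear operator T : E → c₀ is almost Dunford-Pettis. -/

import Mathlib

/-!
If `⨆ k, |T k (x n)|` does not tend to `0`, then, since every coordinate `T k (x n)` tends to
`0`, there are `n_j` and `k_j → ∞` with `|T (k_j) (x (n_j))|` bounded below. σ-Dedekind
completeness provides the band projections `P_j` onto the bands generated by the `x (n_j)`; the
functionals `f_j = T (k_j) ∘ P_j` are pairwise disjoint and agree with `T (k_j)` at `x (n_j)`.
They are also weak*-null, by a Phillips-type argument: for fixed `v` the `P_j v` are disjoint and
dominated by `|v|`, so their order sums `U A = ∑ i ∈ A, P_i v` exist (after splitting into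
positive and negative parts), and Rosenthal's lemma for the bounded additive set functions
`A ↦ |T (k_j)| (U A)` gives an infinite `S` along which `T (k_j) (U S)` would stay away from `0`
if `T (k_j) (P_j v)` did. The wDP* property then forces `f_j (x (n_j)) → 0`, a contradiction.
-/

open Filter Topology

section Defs

variable {E : Type*} [NormedAddCommGroup E] [Lattice E] [HasSolidNorm E] [IsOrderedAddMonoid E] [NormedSpace ℝ E]

/-- The value of the modulus `|f|` of a functional at a positive element `x`:
`|f|(x) = sup { f y : |y| ≤ x }`. -/
noncomputable def absVal (f : E →L[ℝ] ℝ) (x : E) : ℝ :=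
  sSup ((fun y => f y) '' {y | |y| ≤ x})

/-- The value of the positive part `f⁺` of a functional at a positive element `x`:
`f⁺(x) = sup { f y : 0 ≤ y ≤ x }`. -/
noncomputable def posVal (f : E →L[ℝ] ℝ) (x : E) : ℝ :=
  sSup ((fun y => f y) '' {y | 0 ≤ y ∧ y ≤ x})

/-- The value of `|f|` at an arbitrary `x`, via `x = x⁺ - x⁻`. -/
noncomputable def absValF (f : E →L[ℝ] ℝ) (x : E) : ℝ :=
  absVal f (x ⊔ 0) - absVal f (-x ⊔ 0)

/-- The value of `f⁺` at an arbitrary `x`, via `x = x⁺ - x⁻`. -/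
noncomputable def posValF (f : E →L[ℝ] ℝ) (x : E) : ℝ :=
  posVal f (x ⊔ 0) - posVal f (-x ⊔ 0)

/-- The value of `f⁻ = (-f)⁺` at an arbitrary `x`. -/
noncomputable def negValF (f : E →L[ℝ] ℝ) (x : E) : ℝ :=
  posValF (-f) x

/-- `f ≤ g` in the dual order: `f x ≤ g x` for all `x ≥ 0`. -/
def FunLe (f g : E →L[ℝ] ℝ) : Prop := ∀ x : E, 0 ≤ x → f x ≤ g x

/-- `|f| ≤ |g|` in the dual order. -/
def FunAbsLe (f g : E →L[ℝ] ℝ) : Prop := ∀ x : E, 0 ≤ x → absVal f x ≤ absVal g x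

/-- Disjointness of two functionals: `(|f| ∧ |g|)(x) = 0` for all `x ≥ 0`, where
`(|f| ∧ |g|)(x) = inf { |f|(y) + |g|(x - y) : 0 ≤ y ≤ x }` (Riesz–Kantorovich). -/
def FunDisjoint (f g : E →L[ℝ] ℝ) : Prop :=
  ∀ x : E, 0 ≤ x →
    sInf ((fun y => absVal f y + absVal g (x - y)) '' {y | 0 ≤ y ∧ y ≤ x}) = 0

/-- A sequence of functionals is weak*-null. -/
def WeakStarNull (f : ℕ → E →L[ℝ] ℝ) : Prop :=
  ∀ x : E, Tendsto (fun n => f n x) atTop (𝓝 0)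

/-- A sequence in `E` is weakly null. -/
def WeaklyNull (x : ℕ → E) : Prop :=
  ∀ f : E →L[ℝ] ℝ, Tendsto (fun n => f (x n)) atTop (𝓝 0)

/-- A sequence of functionals is weakly null (i.e. null for `σ(E*, E**)`). -/
def WeaklyNullDual (f : ℕ → E →L[ℝ] ℝ) : Prop :=
  ∀ Φ : (E →L[ℝ] ℝ) →L[ℝ] ℝ, Tendsto (fun n => Φ (f n)) atTop (𝓝 0)

/-- Disjointness of two elements of a Banach lattice. -/
def ElemDisjoint (x y : E) : Prop := |x| ⊓ |y| = 0

/-- A set is almost limited: it is norm bounded and every disjoint weak*-null sequence of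
functionals converges uniformly to zero on it. -/
def AlmostLimited (A : Set E) : Prop :=
  Bornology.IsBounded A ∧
    ∀ f : ℕ → E →L[ℝ] ℝ, Pairwise (fun m n => FunDisjoint (f m) (f n)) → WeakStarNull f →
      ∀ ε > 0, ∀ᶠ n in atTop, ∀ x ∈ A, |f n x| < ε

/-- A set is limited: it is norm bounded and every weak*-null sequence of functionals
converges uniformly to zero on it. -/
def LimitedSet (A : Set E) : Prop :=
  Bornology.IsBounded A ∧
    ∀ f : ℕ → E →L[ℝ] ℝ, WeakStarNull f →
      ∀ ε > 0, ∀ᶠ n in atTop, ∀ x ∈ A, |f n x| < ε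

/-- A set is almost Dunford–Pettis: it is norm bounded and every disjoint weakly null
sequence of functionals converges uniformly to zero on it. -/
def AlmostDPSet (A : Set E) : Prop :=
  Bornology.IsBounded A ∧
    ∀ f : ℕ → E →L[ℝ] ℝ, Pairwise (fun m n => FunDisjoint (f m) (f n)) → WeaklyNullDual f →
      ∀ ε > 0, ∀ᶠ n in atTop, ∀ x ∈ A, |f n x| < ε

/-- The solid hull of a set. -/
def SolidHull (A : Set E) : Set E := {y | ∃ x ∈ A, |y| ≤ |x|}

/-- A set is L-weakly compact: norm bounded, and every disjoint sequence in its solid hull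
is norm null. -/
def LWeaklyCompact (A : Set E) : Prop :=
  Bornology.IsBounded A ∧
    ∀ x : ℕ → E, (∀ n, x n ∈ SolidHull A) → Pairwise (fun m n => ElemDisjoint (x m) (x n)) →
      Tendsto (fun n => ‖x n‖) atTop (𝓝 0)

/-- A set `B ⊆ E*` is an almost L-set: norm bounded, and every disjoint weakly null sequence
of `E` converges uniformly to zero on `B`. -/
def AlmostLSet (B : Set (E →L[ℝ] ℝ)) : Prop :=
  Bornology.IsBounded B ∧
    ∀ x : ℕ → E, Pairwise (fun m n => ElemDisjoint (x m) (x n)) → WeaklyNull x →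
      ∀ ε > 0, ∀ᶠ n in atTop, ∀ f ∈ B, |f (x n)| < ε

/-- The solid hull of a set of functionals, using the dual order. -/
def DualSolidHull (B : Set (E →L[ℝ] ℝ)) : Set (E →L[ℝ] ℝ) :=
  {g | ∃ f ∈ B, FunAbsLe g f}

/-- A set `B ⊆ E*` is L-weakly compact: norm bounded, and every disjoint sequence in its
solid hull is norm null. -/
def DualLWeaklyCompact (B : Set (E →L[ℝ] ℝ)) : Prop :=
  Bornology.IsBounded B ∧
    ∀ g : ℕ → E →L[ℝ] ℝ, (∀ n, g n ∈ DualSolidHull B) →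
      Pairwise (fun m n => FunDisjoint (g m) (g n)) →
        Tendsto (fun n => ‖g n‖) atTop (𝓝 0)

end Defs

/-- A Banach lattice is σ-Dedekind complete: every (countable) sequence bounded above has a
supremum. -/
def SigmaDedekindComplete (E : Type*) [NormedAddCommGroup E] [Lattice E] [HasSolidNorm E] [IsOrderedAddMonoid E] : Prop :=
  ∀ s : ℕ → E, (∃ b, ∀ n, s n ≤ b) → ∃ a, IsLUB (Set.range s) a

/-- The norm of `E` is order continuous: if a downward directed set has infimum `0`, then it
contains elements of arbitrarily small norm. -/
def OrderContinuousNorm (E : Type*) [NormedAddCommGroup E] [Lattice E] [HasSolidNorm E] [IsOrderedAddMonoid E] : Prop :=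
  ∀ A : Set E, A.Nonempty → DirectedOn (· ≥ ·) A → IsGLB A 0 →
    ∀ ε > 0, ∃ a ∈ A, ‖a‖ < ε

/-- The norm of `E*` is order continuous (with the dual order spelled out): if a nonempty
family of functionals is downward directed, consists of positive functionals, and `0` is its
greatest lower bound, then it contains functionals of arbitrarily small norm. -/
def DualOrderContinuousNorm (E : Type*) [NormedAddCommGroup E] [Lattice E] [HasSolidNorm E] [IsOrderedAddMonoid E] [NormedSpace ℝ E] :
    Prop :=
  ∀ A : Set (E →L[ℝ] ℝ), A.Nonempty →
    (∀ f ∈ A, ∀ g ∈ A, ∃ h ∈ A, FunLe h f ∧ FunLe h g) →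
    (∀ f ∈ A, FunLe 0 f) →
    (∀ g, (∀ f ∈ A, FunLe g f) → FunLe g 0) →
    ∀ ε > 0, ∃ f ∈ A, ‖f‖ < ε

/-- `E` has the weak Dunford–Pettis* property: `f n (x n) → 0` for every weakly null
sequence `(x n)` in `E` and every disjoint weak*-null sequence `(f n)` in `E*`. -/
def WDPStar (E : Type*) [NormedAddCommGroup E] [Lattice E] [HasSolidNorm E] [IsOrderedAddMonoid E] [NormedSpace ℝ E] : Prop :=
  ∀ (x : ℕ → E) (f : ℕ → E →L[ℝ] ℝ), WeaklyNull x →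
    Pairwise (fun m n => FunDisjoint (f m) (f n)) → WeakStarNull f →
      Tendsto (fun n => f n (x n)) atTop (𝓝 0)

/-- `E` has the positive Schur property: every weakly null sequence of positive elements is
norm null. -/
def PositiveSchur (E : Type*) [NormedAddCommGroup E] [Lattice E] [HasSolidNorm E] [IsOrderedAddMonoid E] [NormedSpace ℝ E] : Prop :=
  ∀ x : ℕ → E, (∀ n, 0 ≤ x n) → WeaklyNull x → Tendsto (fun n => ‖x n‖) atTop (𝓝 0)

/-- A set is relatively weakly compact if the weak closure of its image in the weak space is
compact. -/
def RelWeaklyCompact {E : Type*} [NormedAddCommGroup E] [Lattice E] [HasSolidNorm E] [IsOrderedAddMonoid E] [NormedSpace ℝ E]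
    (W : Set E) : Prop :=
  IsCompact (closure ((toWeakSpace ℝ E) '' W))

open Set Function

lemma IsLUB.of_isCofinalFor_of_isCofinalFor {α : Type*} [Preorder α] {s t : Set α} {a : α}
    (hs : IsLUB s a) (hst : IsCofinalFor s t) (hts : IsCofinalFor t s) : IsLUB t a :=
  ⟨upperBounds_mono_of_isCofinalFor hts hs.1,
    fun _ hb => hs.2 (upperBounds_mono_of_isCofinalFor hst hb)⟩

section LatticeGroup

variable {α : Type*} [AddCommGroup α] [Lattice α] [IsOrderedAddMonoid α]

lemma inf_add_le_add_inf {a b c : α} (ha : 0 ≤ a) (hb : 0 ≤ b) (hc : 0 ≤ c) :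
    a ⊓ (b + c) ≤ a ⊓ b + a ⊓ c := by
  rw [← sub_le_iff_le_add', sub_inf]
  refine sup_le (sub_nonpos.2 inf_le_left |>.trans (le_inf ha hc)) (le_inf ?_ ?_)
  · exact sub_le_iff_le_add.2 (inf_le_left.trans (le_add_of_nonneg_right hb))
  · exact sub_le_iff_le_add'.2 inf_le_right

lemma inf_nsmul_le_nsmul_inf {a b : α} (ha : 0 ≤ a) (hb : 0 ≤ b) (m : ℕ) :
    a ⊓ m • b ≤ m • (a ⊓ b) := by
  induction m with
  | zero => simp
  | succ m ih =>
    rw [succ_nsmul, succ_nsmul]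
    exact (inf_add_le_add_inf ha (nsmul_nonneg hb m) hb).trans (add_le_add_left ih _)

lemma inf_sum_eq_zero {ι : Type*} {b : α} (hb : 0 ≤ b) (F : Finset ι) {a : ι → α}
    (ha : ∀ i, 0 ≤ a i) (h : ∀ i ∈ F, b ⊓ a i = 0) : b ⊓ ∑ i ∈ F, a i = 0 := by
  refine (Finset.sum_induction a (fun x => 0 ≤ x ∧ b ⊓ x = 0) ?_ ⟨le_rfl, inf_eq_right.2 hb⟩
    fun i hi => ⟨ha i, h i hi⟩).2
  rintro x y ⟨hx, hbx⟩ ⟨hy, hby⟩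
  refine ⟨add_nonneg hx hy, le_antisymm ?_ (le_inf hb (add_nonneg hx hy))⟩
  simpa [hbx, hby] using inf_add_le_add_inf hb hx hy

lemma sum_le_of_pairwise_inf_eq_zero {ι : Type*} (F : Finset ι) {a : ι → α} {w : α} (hw : 0 ≤ w)
    (ha : ∀ i, 0 ≤ a i) (hd : Pairwise fun i j => a i ⊓ a j = 0) (haw : ∀ i, a i ≤ w) :
    ∑ i ∈ F, a i ≤ w := by
  classical
  induction F using Finset.induction_on with
  | empty => simpa using hw
  | insert j F hj ih =>
    have hdisj : a j ⊓ ∑ i ∈ F, a i = 0 :=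
      inf_sum_eq_zero (ha j) F ha fun i hi => hd (ne_of_mem_of_not_mem hi hj).symm
    rw [Finset.sum_insert hj, ← inf_add_sup, hdisj, zero_add]
    exact sup_le (haw j) ih

lemma abs_sub_le_sup_of_nonneg {u v : α} (hu : 0 ≤ u) (hv : 0 ≤ v) : |u - v| ≤ u ⊔ v :=
  abs_le'.2 ⟨(sub_le_self _ hv).trans le_sup_left, by
    rw [neg_sub]; exact (sub_le_self _ hu).trans le_sup_right⟩

lemma posPart_le_abs (a : α) : a⁺ ≤ |a| := by
  rw [← posPart_add_negPart]; exact le_add_of_nonneg_right (negPart_nonneg a)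

lemma negPart_le_abs (a : α) : a⁻ ≤ |a| := by
  rw [← posPart_add_negPart]; exact le_add_of_nonneg_left (posPart_nonneg a)

/-- Riesz decomposition property. -/
lemma exists_add_eq_of_abs_le_add {z y y' : α} (hy : 0 ≤ y) (hy' : 0 ≤ y') (hz : |z| ≤ y + y') :
    ∃ z₁ z₂ : α, z = z₁ + z₂ ∧ |z₁| ≤ y ∧ |z₂| ≤ y' := by
  obtain ⟨hz1, hz2⟩ := abs_le'.1 hz
  refine ⟨(z ⊔ -y) ⊓ y, z - (z ⊔ -y) ⊓ y, by abel, abs_le'.2 ⟨inf_le_right, ?_⟩, abs_le'.2 ⟨?_, ?_⟩⟩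
  · exact neg_le.1 (le_inf le_sup_right ((neg_nonpos.2 hy).trans hy))
  · calc z - (z ⊔ -y) ⊓ y ≤ z - z ⊓ y := sub_le_sub_left (inf_le_inf_right y le_sup_left) z
      _ = (z - z) ⊔ (z - y) := by rw [sub_inf]
      _ ≤ y' := sup_le (by simpa using hy') (sub_le_iff_le_add'.2 hz1)
  · calc -(z - (z ⊔ -y) ⊓ y) ≤ (z ⊔ -y) - z := by rw [neg_sub]; exact sub_le_sub_right inf_le_left z
      _ = (z - z) ⊔ (-y - z) := by rw [sup_sub]
      _ ≤ y' := sup_le (by simpa using hy') <| by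
          rw [show -y - z = -z - y by abel]; exact sub_le_iff_le_add.2 (by rwa [add_comm])

lemma isLUB_range_add {ι : Type*} [SemilatticeSup ι] {s t : ι → α} {a b : α} (hs : Monotone s)
    (ht : Monotone t) (ha : IsLUB (range s) a) (hb : IsLUB (range t) b) :
    IsLUB (range (s + t)) (a + b) := by
  refine (ha.add hb).of_isCofinalFor ?_ ?_
  · rintro _ ⟨i, rfl⟩
    exact Set.add_mem_add ⟨i, rfl⟩ ⟨i, rfl⟩
  · rintro _ ⟨_, ⟨i, rfl⟩, _, ⟨j, rfl⟩, rfl⟩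
    exact ⟨_, ⟨i ⊔ j, rfl⟩, add_le_add (hs le_sup_left) (ht le_sup_right)⟩

lemma IsLUB.inf_eq_zero {ι : Type*} [Nonempty ι] {s : ι → α} {a b : α} (ha : IsLUB (range s) a)
    (h : ∀ i, s i ⊓ b = 0) : a ⊓ b = 0 := by
  inhabit ι
  have ha0 : 0 ≤ a := ((h default).symm.le.trans inf_le_left).trans (ha.1 ⟨default, rfl⟩)
  have hb0 : 0 ≤ b := (h default).symm.le.trans inf_le_right
  have hab : ∀ i, a ⊓ b ≤ a - s i := fun i => by
    have := (le_abs_self _).trans (abs_inf_sub_inf_le_abs a (s i) b)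
    rwa [h, sub_zero, abs_of_nonneg (sub_nonneg.2 (ha.1 ⟨i, rfl⟩))] at this
  have : a ≤ a - a ⊓ b := ha.2 <| by
    rintro _ ⟨i, rfl⟩
    exact le_sub_comm.1 (hab i)
  exact le_antisymm (by simpa using this) (le_inf ha0 hb0)

end LatticeGroup

namespace SigmaDedekindComplete

section BandComponent

variable {E : Type*} [NormedAddCommGroup E] [Lattice E] [HasSolidNorm E] [IsOrderedAddMonoid E]
  (hσ : SigmaDedekindComplete E)

/-- The component of `u` in the band generated by `w`; only meaningful for `u ≥ 0`. -/
noncomputable def bandComponent (w u : E) : E :=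
  (hσ (fun m : ℕ => u ⊓ m • |w|) ⟨u, fun _ => inf_le_left⟩).choose

lemma isLUB_bandComponent (w u : E) :
    IsLUB (range fun m : ℕ => u ⊓ m • |w|) (hσ.bandComponent w u) :=
  (hσ _ ⟨u, fun _ => inf_le_left⟩).choose_spec

lemma bandComponent_le_self (w u : E) : hσ.bandComponent w u ≤ u :=
  (hσ.isLUB_bandComponent w u).2 <| by rintro _ ⟨m, rfl⟩; exact inf_le_left

lemma bandComponent_nonneg (w : E) {u : E} (hu : 0 ≤ u) : 0 ≤ hσ.bandComponent w u := by
  simpa [inf_eq_right.2 hu] using (hσ.isLUB_bandComponent w u).1 ⟨0, rfl⟩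

lemma bandComponent_mono (w : E) {u v : E} (h : u ≤ v) :
    hσ.bandComponent w u ≤ hσ.bandComponent w v :=
  (hσ.isLUB_bandComponent w u).2 <| by
    rintro _ ⟨m, rfl⟩
    exact (inf_le_inf_right _ h).trans ((hσ.isLUB_bandComponent w v).1 ⟨m, rfl⟩)

lemma bandComponent_of_le {w u : E} (h : u ≤ |w|) : hσ.bandComponent w u = u :=
  le_antisymm (hσ.bandComponent_le_self w u) <| by
    simpa [inf_eq_left.2 h] using (hσ.isLUB_bandComponent w u).1 ⟨1, rfl⟩

lemma bandComponent_add (w : E) {u v : E} (hu : 0 ≤ u) (hv : 0 ≤ v) :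
    hσ.bandComponent w (u + v) = hσ.bandComponent w u + hσ.bandComponent w v := by
  have hmono : ∀ u : E, Monotone fun m : ℕ => u ⊓ m • |w| := fun u _ _ h =>
    inf_le_inf_left u (nsmul_le_nsmul_left (abs_nonneg w) h)
  refine (hσ.isLUB_bandComponent w (u + v)).unique <|
    (isLUB_range_add (hmono u) (hmono v) (hσ.isLUB_bandComponent w u)
      (hσ.isLUB_bandComponent w v)).of_isCofinalFor_of_isCofinalFor ?_ ?_
  · rintro _ ⟨m, rfl⟩
    refine ⟨_, ⟨m + m, rfl⟩, ?_⟩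
    dsimp only [Pi.add_apply]
    rw [add_nsmul]
    exact le_inf (add_le_add inf_le_left inf_le_left) (add_le_add inf_le_right inf_le_right)
  · rintro _ ⟨m, rfl⟩
    refine ⟨_, ⟨m, rfl⟩, ?_⟩
    dsimp only [Pi.add_apply]
    simpa only [inf_comm _ (m • |w|)] using
      inf_add_le_add_inf (nsmul_nonneg (abs_nonneg w) m) hu hv

lemma bandComponent_bandComponent_self (w u : E) :
    hσ.bandComponent w (hσ.bandComponent w u) = hσ.bandComponent w u :=
  le_antisymm (hσ.bandComponent_le_self w _) <| (hσ.isLUB_bandComponent w u).2 <| by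
    rintro _ ⟨m, rfl⟩
    exact (le_inf ((hσ.isLUB_bandComponent w u).1 ⟨m, rfl⟩) inf_le_right).trans
      ((hσ.isLUB_bandComponent w _).1 ⟨m, rfl⟩)

lemma bandComponent_sub_bandComponent (w : E) {u : E} (hu : 0 ≤ u) :
    hσ.bandComponent w (u - hσ.bandComponent w u) = 0 := by
  have := hσ.bandComponent_add w (sub_nonneg.2 (hσ.bandComponent_le_self w u))
    (hσ.bandComponent_nonneg w hu)
  rwa [sub_add_cancel, hσ.bandComponent_bandComponent_self, right_eq_add] at this

lemma inf_bandComponent_eq_zero {a w u : E} (ha : 0 ≤ a) (hu : 0 ≤ u) (h : a ⊓ |w| = 0) :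
    a ⊓ hσ.bandComponent w u = 0 := by
  rw [inf_comm]
  refine (hσ.isLUB_bandComponent w u).inf_eq_zero fun m => le_antisymm ?_ (le_inf (le_inf hu
    (nsmul_nonneg (abs_nonneg w) m)) ha)
  calc u ⊓ m • |w| ⊓ a ≤ a ⊓ m • |w| := le_inf inf_le_right (inf_le_left.trans inf_le_right)
    _ ≤ m • (a ⊓ |w|) := inf_nsmul_le_nsmul_inf ha (abs_nonneg w) m
    _ = 0 := by rw [h, smul_zero]

lemma bandComponent_eq_zero {w u : E} (hu : 0 ≤ u) (h : u ⊓ |w| = 0) :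
    hσ.bandComponent w u = 0 := by
  simpa [inf_eq_right.2 (hσ.bandComponent_le_self w u)] using
    hσ.inf_bandComponent_eq_zero hu hu h

lemma bandComponent_inf_bandComponent {w w' u u' : E} (h : |w| ⊓ |w'| = 0) (hu : 0 ≤ u)
    (hu' : 0 ≤ u') : hσ.bandComponent w u ⊓ hσ.bandComponent w' u' = 0 :=
  hσ.inf_bandComponent_eq_zero (hσ.bandComponent_nonneg w hu) hu' <| by
    rw [inf_comm]; exact hσ.inf_bandComponent_eq_zero (abs_nonneg w') hu (by rwa [inf_comm])

lemma bandComponent_bandComponent {w w' u : E} (h : |w| ⊓ |w'| = 0) (hu : 0 ≤ u) :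
    hσ.bandComponent w' (hσ.bandComponent w u) = 0 :=
  hσ.bandComponent_eq_zero (hσ.bandComponent_nonneg w hu) <| by
    rw [inf_comm]; exact hσ.inf_bandComponent_eq_zero (abs_nonneg w') hu (by rwa [inf_comm])

lemma bandComponent_posPart_sub_negPart_add (w u v : E) :
    hσ.bandComponent w (u + v)⁺ - hσ.bandComponent w (u + v)⁻ =
      (hσ.bandComponent w u⁺ - hσ.bandComponent w u⁻) +
        (hσ.bandComponent w v⁺ - hσ.bandComponent w v⁻) := by
  have hpos : ∀ a : E, a⁺ = a + a⁻ := fun a => sub_eq_iff_eq_add.1 (posPart_sub_negPart a)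
  have key : (u + v)⁺ + (u⁻ + v⁻) = (u + v)⁻ + (u⁺ + v⁺) := by
    rw [hpos (u + v), hpos u, hpos v]; abel
  have hQ := congrArg (hσ.bandComponent w) key
  simp only [hσ.bandComponent_add w, posPart_nonneg, negPart_nonneg, add_nonneg] at hQ
  rw [sub_eq_iff_eq_add, ← add_sub_cancel_right (hσ.bandComponent w (u + v)⁺)
    (hσ.bandComponent w u⁻ + hσ.bandComponent w v⁻), hQ]
  abel

lemma abs_bandComponent_posPart_sub_negPart_le (w u : E) :
    |hσ.bandComponent w u⁺ - hσ.bandComponent w u⁻| ≤ hσ.bandComponent w |u| :=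
  (abs_sub_le_sup_of_nonneg (hσ.bandComponent_nonneg w (posPart_nonneg u))
    (hσ.bandComponent_nonneg w (negPart_nonneg u))).trans
    (sup_le (hσ.bandComponent_mono w (posPart_le_abs u))
      (hσ.bandComponent_mono w (negPart_le_abs u)))

end BandComponent

section BandProjection

variable {E : Type*} [NormedAddCommGroup E] [Lattice E] [HasSolidNorm E] [IsOrderedAddMonoid E]
  [NormedSpace ℝ E] (hσ : SigmaDedekindComplete E)

noncomputable def bandProj (w : E) : E →L[ℝ] E :=
  let P : E →+ E := AddMonoidHom.mk' (fun u => hσ.bandComponent w u⁺ - hσ.bandComponent w u⁻)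
    (hσ.bandComponent_posPart_sub_negPart_add w)
  P.toRealLinearMap <| AddMonoidHomClass.continuous_of_bound P 1 fun u => by
    rw [one_mul, ← norm_abs_eq_norm u]
    refine norm_le_norm_of_abs_le_abs ?_
    rw [abs_abs]
    exact (hσ.abs_bandComponent_posPart_sub_negPart_le w u).trans (hσ.bandComponent_le_self w |u|)

lemma bandProj_apply (w u : E) :
    hσ.bandProj w u = hσ.bandComponent w u⁺ - hσ.bandComponent w u⁻ := rfl

lemma abs_bandProj_le (w u : E) : |hσ.bandProj w u| ≤ hσ.bandComponent w |u| :=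
  hσ.abs_bandComponent_posPart_sub_negPart_le w u

lemma abs_bandProj_le_abs (w u : E) : |hσ.bandProj w u| ≤ |u| :=
  (hσ.abs_bandProj_le w u).trans (hσ.bandComponent_le_self w |u|)

lemma bandProj_self (w : E) : hσ.bandProj w w = w := by
  rw [bandProj_apply, hσ.bandComponent_of_le (posPart_le_abs w),
    hσ.bandComponent_of_le (negPart_le_abs w), posPart_sub_negPart]

lemma bandProj_eq_zero {w u : E} (h : hσ.bandComponent w |u| = 0) : hσ.bandProj w u = 0 := by
  have hP := h ▸ hσ.abs_bandProj_le w u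
  exact le_antisymm ((le_abs_self _).trans hP) (neg_nonpos.1 ((neg_le_abs _).trans hP))

lemma abs_bandProj_inf_abs_bandProj {w w' : E} (h : |w| ⊓ |w'| = 0) (u u' : E) :
    |hσ.bandProj w u| ⊓ |hσ.bandProj w' u'| = 0 :=
  le_antisymm ((inf_le_inf (hσ.abs_bandProj_le w u) (hσ.abs_bandProj_le w' u')).trans
    (hσ.bandComponent_inf_bandComponent h (abs_nonneg u) (abs_nonneg u')).le)
    (le_inf (abs_nonneg _) (abs_nonneg _))

end BandProjection

end SigmaDedekindComplete

section Modulus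

variable {E : Type*} [NormedAddCommGroup E] [Lattice E] [IsOrderedAddMonoid E] [NormedSpace ℝ E]
  {f g : E →L[ℝ] ℝ} {y y' z : E}

lemma absVal_le (hy : 0 ≤ y) {c : ℝ} (hc : ∀ z : E, |z| ≤ y → f z ≤ c) : absVal f y ≤ c :=
  csSup_le ⟨0, 0, by simpa using hy, map_zero f⟩ <| by rintro _ ⟨z, hz, rfl⟩; exact hc z hz

variable [HasSolidNorm E]

lemma apply_le_norm_mul_of_abs_le (hz : |z| ≤ y) : f z ≤ ‖f‖ * ‖y‖ := by
  have hy : |y| = y := abs_of_nonneg ((abs_nonneg z).trans hz)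
  exact (le_abs_self _).trans <| (f.le_opNorm z).trans <|
    mul_le_mul_of_nonneg_left (norm_le_norm_of_abs_le_abs (by rwa [hy])) (norm_nonneg f)

lemma le_absVal (hz : |z| ≤ y) : f z ≤ absVal f y :=
  le_csSup ⟨‖f‖ * ‖y‖, by rintro _ ⟨z, hz, rfl⟩; exact apply_le_norm_mul_of_abs_le hz⟩ ⟨z, hz, rfl⟩

lemma absVal_nonneg (hy : 0 ≤ y) : 0 ≤ absVal f y := by
  simpa using le_absVal (f := f) (z := 0) (by simpa using hy)

lemma abs_apply_le_absVal (hz : |z| ≤ y) : |f z| ≤ absVal f y := by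
  refine abs_le.2 ⟨?_, le_absVal hz⟩
  have := le_absVal (f := f) (y := y) (z := -z) ((abs_neg z).trans_le hz)
  rw [map_neg] at this
  linarith

lemma absVal_le_norm_mul (hy : 0 ≤ y) : absVal f y ≤ ‖f‖ * ‖y‖ :=
  absVal_le hy fun _ => apply_le_norm_mul_of_abs_le

lemma absVal_add (hy : 0 ≤ y) (hy' : 0 ≤ y') : absVal f (y + y') = absVal f y + absVal f y' := by
  refine le_antisymm (absVal_le (add_nonneg hy hy') fun z hz => ?_) ?_
  · obtain ⟨z₁, z₂, rfl, h₁, h₂⟩ := exists_add_eq_of_abs_le_add hy hy' hz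
    rw [map_add]
    exact add_le_add (le_absVal h₁) (le_absVal h₂)
  · rw [← le_sub_iff_add_le]
    refine absVal_le hy fun z₁ h₁ => ?_
    rw [le_sub_comm]
    refine absVal_le hy' fun z₂ h₂ => ?_
    rw [le_sub_iff_add_le', ← map_add]
    exact le_absVal ((abs_add_le z₁ z₂).trans (add_le_add h₁ h₂))

lemma funDisjoint_of_forall_exists (h : ∀ x : E, 0 ≤ x →
    ∃ y, 0 ≤ y ∧ y ≤ x ∧ absVal f y = 0 ∧ absVal g (x - y) = 0) : FunDisjoint f g := by
  intro x hx
  obtain ⟨y, hy0, hyx, hfy, hgy⟩ := h x hx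
  refine IsLeast.csInf_eq ⟨⟨y, ⟨hy0, hyx⟩, by simp [hfy, hgy]⟩, ?_⟩
  rintro _ ⟨y', ⟨hy'0, hy'x⟩, rfl⟩
  exact add_nonneg (absVal_nonneg hy'0) (absVal_nonneg (sub_nonneg.2 hy'x))

end Modulus

namespace SigmaDedekindComplete

variable {E : Type*} [NormedAddCommGroup E] [Lattice E] [HasSolidNorm E] [IsOrderedAddMonoid E]
  [NormedSpace ℝ E] (hσ : SigmaDedekindComplete E)

lemma absVal_comp_bandProj_eq_zero (g : E →L[ℝ] ℝ) {w y : E} (hy : 0 ≤ y)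
    (h : hσ.bandComponent w y = 0) : absVal (g ∘L hσ.bandProj w) y = 0 := by
  refine le_antisymm (absVal_le hy fun z hz => ?_) (absVal_nonneg hy)
  have hz0 : hσ.bandComponent w |z| = 0 := le_antisymm
    ((hσ.bandComponent_mono w hz).trans h.le) (hσ.bandComponent_nonneg w (abs_nonneg z))
  rw [ContinuousLinearMap.comp_apply, hσ.bandProj_eq_zero hz0, map_zero]

lemma funDisjoint_comp_bandProj (g g' : E →L[ℝ] ℝ) {w w' : E} (h : |w| ⊓ |w'| = 0) :
    FunDisjoint (g ∘L hσ.bandProj w) (g' ∘L hσ.bandProj w') := by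
  refine funDisjoint_of_forall_exists fun x hx => ⟨x - hσ.bandComponent w x,
    sub_nonneg.2 (hσ.bandComponent_le_self w x), sub_le_self _ (hσ.bandComponent_nonneg w hx),
    hσ.absVal_comp_bandProj_eq_zero g (sub_nonneg.2 (hσ.bandComponent_le_self w x))
      (hσ.bandComponent_sub_bandComponent w hx), ?_⟩
  rw [sub_sub_cancel]
  exact hσ.absVal_comp_bandProj_eq_zero g' (hσ.bandComponent_nonneg w hx)
    (hσ.bandComponent_bandComponent h hx)

end SigmaDedekindComplete

section Rosenthal

structure IsBoundedAddContent {α : Type*} (μ : Set α → ℝ) (C : ℝ) : Prop where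
  nonneg : ∀ A, 0 ≤ μ A
  union : ∀ A B, Disjoint A B → μ (A ∪ B) = μ A + μ B
  le_bound : ∀ A, μ A ≤ C

namespace IsBoundedAddContent

variable {α : Type*} {μ : Set α → ℝ} {C : ℝ}

lemma mono (hμ : IsBoundedAddContent μ C) {A B : Set α} (h : A ⊆ B) : μ A ≤ μ B := by
  rw [← union_sdiff_cancel h, hμ.union _ _ disjoint_sdiff_right]
  exact le_add_of_nonneg_right (hμ.nonneg _)

lemma comp_biUnion (hμ : IsBoundedAddContent μ C) {ι : Type*} {N : ι → Set α}
    (hN : Pairwise (Disjoint on N)) :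
    IsBoundedAddContent (fun A : Set ι => μ (⋃ i ∈ A, N i)) C where
  nonneg _ := hμ.nonneg _
  union A B hAB := by
    rw [biUnion_union]
    refine hμ.union _ _ <| disjoint_iUnion₂_left.2 fun i hi =>
      disjoint_iUnion₂_right.2 fun j hj => hN fun hij => disjoint_left.1 hAB hi (hij ▸ hj)
  le_bound _ := hμ.le_bound _

end IsBoundedAddContent

/-- Induction on `d`: the mass `ν j {j} ≥ n ε` of the diagonal atoms grows by `ε` at each step
and cannot exceed the bound `C`. -/
lemma exists_infinite_sdiff_singleton_lt_aux {ε C : ℝ} (d : ℕ) : ∀ (n : ℕ) (ν : ℕ → Set ℕ → ℝ),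
    (∀ j, IsBoundedAddContent (ν j) C) → C < (n + d) * ε → (∀ j, n * ε ≤ ν j {j}) →
      ∃ S : Set ℕ, S.Infinite ∧ ∀ j ∈ S, ν j (S \ {j}) < ε := by
  induction d with
  | zero =>
    intro n ν hν hC hn
    have := (hn 0).trans ((hν 0).le_bound {0})
    push_cast at hC
    linarith
  | succ d ih =>
    intro n ν hν hC hn
    set N : ℕ → Set ℕ := fun l => {m | (Nat.unpair m).1 = l}
    have hN : Pairwise (Disjoint on N) := fun l l' hll' =>
      disjoint_left.2 fun m hm hm' => hll' (hm.symm.trans hm')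
    by_cases h : ∃ l, {j ∈ N l | ν j (N l \ {j}) < ε}.Infinite
    · obtain ⟨l, hl⟩ := h
      exact ⟨_, hl, fun j hj =>
        ((hν j).mono (sdiff_subset_sdiff_left (sep_subset _ _))).trans_lt hj.2⟩
    simp only [not_exists, not_infinite] at h
    have hex : ∀ l, ∃ j ∈ N l, ε ≤ ν j (N l \ {j}) := fun l => by
      have hinf : (N l).Infinite := infinite_of_injective_forall_mem (f := Nat.pair l)
        (fun _ _ h => (Nat.pair_eq_pair.1 h).2)
        fun i => show (Nat.unpair (Nat.pair l i)).1 = l by rw [Nat.unpair_pair]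
      obtain ⟨j, hjN, hj⟩ := (hinf.sdiff (h l)).nonempty
      exact ⟨j, hjN, not_lt.1 fun hlt => hj ⟨hjN, hlt⟩⟩
    choose J hJN hJ using hex
    have hJinj : J.Injective := fun l l' h => (hJN l).symm.trans (h ▸ hJN l')
    obtain ⟨S, hS, hSν⟩ := ih (n + 1) (fun l A => ν (J l) (⋃ m ∈ A, N m))
      (fun l => (hν (J l)).comp_biUnion hN) (by push_cast at hC ⊢; linarith) fun l => by
        have hsplit := (hν (J l)).union _ _ (disjoint_sdiff_right (s := {J l}) (t := N l))
        rw [union_sdiff_cancel (singleton_subset_iff.2 (hJN l))] at hsplit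
        simp only [mem_singleton_iff, iUnion_iUnion_eq_left, hsplit]
        push_cast
        linarith [hn (J l), hJ l]
    refine ⟨J '' S, hS.image hJinj.injOn, ?_⟩
    rintro _ ⟨l, hl, rfl⟩
    refine ((hν (J l)).mono ?_).trans_lt (hSν l hl)
    rintro _ ⟨⟨m, hm, rfl⟩, hne⟩
    exact mem_biUnion ⟨hm, fun h => hne (h ▸ rfl)⟩ (hJN m)

/-- Rosenthal's lemma. -/
theorem exists_infinite_sdiff_singleton_lt {ν : ℕ → Set ℕ → ℝ} {C ε : ℝ}
    (hν : ∀ j, IsBoundedAddContent (ν j) C) (hε : 0 < ε) :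
    ∃ S : Set ℕ, S.Infinite ∧ ∀ j ∈ S, ν j (S \ {j}) < ε := by
  obtain ⟨d, hd⟩ := exists_nat_gt (C / ε)
  refine exists_infinite_sdiff_singleton_lt_aux d 0 ν hν ?_ fun j => by simpa using (hν j).nonneg _
  rw [div_lt_iff₀ hε] at hd
  simpa using hd

end Rosenthal

namespace SigmaDedekindComplete

variable {E : Type*} [NormedAddCommGroup E] [Lattice E] [HasSolidNorm E] [IsOrderedAddMonoid E]

/-- `U A` is the order sum `∑ i ∈ A, y i`. -/
lemma exists_setSum (hσ : SigmaDedekindComplete E) {y : ℕ → E} {w : E} (hy0 : ∀ i, 0 ≤ y i)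
    (hy : Pairwise fun i j => y i ⊓ y j = 0) (hyw : ∀ i, y i ≤ w) :
    ∃ U : Set ℕ → E, (∀ A, 0 ≤ U A ∧ U A ≤ w) ∧
      (∀ A B, Disjoint A B → U (A ∪ B) = U A + U B) ∧ ∀ i, U {i} = y i := by
  classical
  set s : Set ℕ → ℕ → E := fun A N => ∑ i ∈ Finset.range N, A.indicator y i
  have hs0 : ∀ (A : Set ℕ) i, 0 ≤ A.indicator y i := fun A => indicator_nonneg fun i _ => hy0 i
  have hmono : ∀ A, Monotone (s A) := fun A _ _ h =>
    Finset.sum_le_sum_of_subset_of_nonneg (Finset.range_mono h) fun i _ _ => hs0 A i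
  have hsw : ∀ A N, s A N ≤ w := fun A N =>
    (Finset.sum_le_sum fun i _ => indicator_le_self' (fun i _ => hy0 i) i).trans
      (sum_le_of_pairwise_inf_eq_zero _ ((hy0 0).trans (hyw 0)) hy0 hy hyw)
  choose U hU using fun A => hσ (s A) ⟨w, hsw A⟩
  refine ⟨U, fun A => ⟨?_, (hU A).2 ?_⟩, fun A B hAB => (hU (A ∪ B)).unique ?_, fun i => ?_⟩
  · simpa [s] using (hU A).1 ⟨0, rfl⟩
  · rintro _ ⟨N, rfl⟩
    exact hsw A N
  · have : s (A ∪ B) = s A + s B := funext fun N => by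
      simp [s, indicator_union_of_disjoint hAB, Finset.sum_add_distrib]
    rw [this]
    exact isLUB_range_add (hmono A) (hmono B) (hU A) (hU B)
  · refine (hU {i}).unique (IsGreatest.isLUB ⟨⟨i + 1, by simp [s, indicator_apply]⟩, ?_⟩)
    rintro _ ⟨N, rfl⟩
    simp only [s, indicator_apply, mem_singleton_iff, Finset.sum_ite_eq', Finset.mem_range]
    split_ifs
    exacts [le_rfl, hy0 i]

variable [NormedSpace ℝ E]

lemma not_forall_le_abs_apply (hσ : SigmaDedekindComplete E) {φ : ℕ → E →L[ℝ] ℝ} {C : ℝ}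
    (hC : ∀ j, ‖φ j‖ ≤ C) (hφ : WeakStarNull φ) {y : ℕ → E} {w : E} (hy0 : ∀ i, 0 ≤ y i)
    (hy : Pairwise fun i j => y i ⊓ y j = 0) (hyw : ∀ i, y i ≤ w) {δ : ℝ} (hδ : 0 < δ) :
    ¬ ∀ j, δ ≤ |φ j (y j)| := by
  intro hlow
  obtain ⟨U, hUw, hUadd, hUy⟩ := hσ.exists_setSum hy0 hy hyw
  have hν : ∀ j, IsBoundedAddContent (fun A => absVal (φ j) (U A)) (C * ‖w‖) := fun j =>
    { nonneg := fun A => absVal_nonneg (hUw A).1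
      union := fun A B hAB => by simp only [hUadd A B hAB, absVal_add (hUw A).1 (hUw B).1]
      le_bound := fun A => (absVal_le_norm_mul (hUw A).1).trans <|
        mul_le_mul (hC j) (norm_le_norm_of_abs_le_abs (by
          rw [abs_of_nonneg (hUw A).1]; exact (hUw A).2.trans (le_abs_self w)))
          (norm_nonneg _) ((norm_nonneg _).trans (hC j)) }
  obtain ⟨S, hS, hSν⟩ := exists_infinite_sdiff_singleton_lt hν (half_pos hδ)
  have hbig : ∀ j ∈ S, δ / 2 < |φ j (U S)| := fun j hj => by
    have hsplit : U S = y j + U (S \ {j}) := by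
      rw [← hUy j, ← hUadd _ _ disjoint_sdiff_right,
        union_sdiff_cancel (singleton_subset_iff.2 hj)]
    have hrest := abs_apply_le_absVal (f := φ j) (abs_of_nonneg (hUw (S \ {j})).1).le
    have hyj : φ j (y j) = φ j (U S) - φ j (U (S \ {j})) := by
      rw [hsplit, map_add, add_sub_cancel_right]
    have htri := abs_sub (φ j (U S)) (φ j (U (S \ {j})))
    rw [← hyj] at htri
    linarith [hlow j, hSν j hj]
  obtain ⟨N, hN⟩ := eventually_atTop.1 <|
    (hφ (U S)).abs.eventually_lt_const (u := δ / 2) (by simpa using hδ)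
  obtain ⟨j, hjS, hjN⟩ := hS.exists_gt N
  exact (hbig j hjS).not_gt (by simpa using hN j hjN.le)

end SigmaDedekindComplete

lemma WeakStarNull.exists_norm_le {E : Type*} [NormedAddCommGroup E] [NormedSpace ℝ E]
    [CompleteSpace E] {φ : ℕ → E →L[ℝ] ℝ} (hφ : WeakStarNull φ) : ∃ C, ∀ j, ‖φ j‖ ≤ C :=
  banach_steinhaus fun v => by
    obtain ⟨C, hC⟩ := (hφ v).norm.bddAbove_range
    exact ⟨C, fun j => hC ⟨j, rfl⟩⟩

section WeakStar

variable {E : Type*} [NormedAddCommGroup E] [Lattice E] [HasSolidNorm E] [IsOrderedAddMonoid E]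
  [NormedSpace ℝ E] [CompleteSpace E] {φ : ℕ → E →L[ℝ] ℝ}

lemma WeakStarNull.tendsto_apply_of_pairwise_inf_eq_zero (hσ : SigmaDedekindComplete E)
    (hφ : WeakStarNull φ) {y : ℕ → E} {w : E} (hy0 : ∀ i, 0 ≤ y i)
    (hy : Pairwise fun i j => y i ⊓ y j = 0) (hyw : ∀ i, y i ≤ w) :
    Tendsto (fun j => φ j (y j)) atTop (𝓝 0) := by
  obtain ⟨C, hC⟩ := hφ.exists_norm_le
  by_contra hnot
  simp only [Metric.tendsto_nhds, not_forall, not_eventually, not_lt, Real.dist_eq, sub_zero]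
    at hnot
  obtain ⟨δ, hδ, hfreq⟩ := hnot
  obtain ⟨g, hg, hgδ⟩ := extraction_of_frequently_atTop hfreq
  exact hσ.not_forall_le_abs_apply (fun j => hC (g j)) (fun v => (hφ v).comp hg.tendsto_atTop)
    (fun i => hy0 (g i)) (fun i j hij => hy (hg.injective.ne hij)) (fun i => hyw (g i)) hδ hgδ

lemma WeakStarNull.tendsto_apply_of_pairwise_disjoint (hσ : SigmaDedekindComplete E)
    (hφ : WeakStarNull φ) {z : ℕ → E} {w : E} (hz : Pairwise fun i j => ElemDisjoint (z i) (z j))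
    (hzw : ∀ i, |z i| ≤ w) : Tendsto (fun j => φ j (z j)) atTop (𝓝 0) := by
  have hpart : ∀ p : E → E, (∀ a, 0 ≤ p a) → (∀ a, p a ≤ |a|) →
      Tendsto (fun j => φ j (p (z j))) atTop (𝓝 0) := fun p hp0 hp =>
    hφ.tendsto_apply_of_pairwise_inf_eq_zero hσ (fun i => hp0 _)
      (fun i j hij => le_antisymm ((inf_le_inf (hp _) (hp _)).trans (hz hij).le)
        (le_inf (hp0 _) (hp0 _))) fun i => (hp _).trans (hzw i)
  simpa [← map_sub] using
    (hpart _ posPart_nonneg posPart_le_abs).sub (hpart _ negPart_nonneg negPart_le_abs)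

/-- The band projections onto the bands generated by the `x j` turn `φ` into a disjoint
weak*-null sequence that still agrees with `φ j` at `x j`. -/
theorem WDPStar.tendsto_apply_of_pairwise_disjoint (h : WDPStar E)
    (hσ : SigmaDedekindComplete E) (hφ : WeakStarNull φ) {x : ℕ → E}
    (hdx : Pairwise fun m n => ElemDisjoint (x m) (x n)) (hwx : WeaklyNull x) :
    Tendsto (fun j => φ j (x j)) atTop (𝓝 0) := by
  have hf : WeakStarNull fun j => φ j ∘L hσ.bandProj (x j) := fun v =>
    hφ.tendsto_apply_of_pairwise_disjoint hσ
      (fun i j hij => hσ.abs_bandProj_inf_abs_bandProj (hdx hij) v v)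
      fun j => hσ.abs_bandProj_le_abs (x j) v
  simpa [hσ.bandProj_self] using
    h x _ hwx (fun i j hij => hσ.funDisjoint_comp_bandProj _ _ (hdx hij)) hf

end WeakStar

lemma tendsto_ciSup_of_tendsto_diagonal {a : ℕ → ℕ → ℝ} (hbdd : ∀ n, BddAbove (range (a n)))
    (hcol : ∀ k, Tendsto (a · k) atTop (𝓝 0))
    (hdiag : ∀ ν κ : ℕ → ℕ, StrictMono ν → Tendsto κ atTop atTop →
      Tendsto (fun j => a (ν j) (κ j)) atTop (𝓝 0)) :
    Tendsto (fun n => ⨆ k, a n k) atTop (𝓝 0) := by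
  refine tendsto_order.2 ⟨fun b hb => ((hcol 0).eventually (lt_mem_nhds hb)).mono fun n hn =>
    hn.trans_le (le_ciSup (hbdd n) 0), fun ε hε => ?_⟩
  by_contra hnot
  obtain ⟨ν, hν, hνε⟩ := extraction_of_frequently_atTop <|
    (not_eventually.1 hnot).mono fun n hn => not_lt.1 hn
  have hex : ∀ j, ∃ k, ε / 2 < a (ν j) k := fun j =>
    exists_lt_of_lt_ciSup ((half_lt_self hε).trans_le (hνε j))
  choose κ hκ using hex
  -- `κ j → ∞` because each fixed column `a · k` tends to `0`
  have hκtop : Tendsto κ atTop atTop := tendsto_atTop.2 fun K => by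
    have hsmall : ∀ᶠ j in atTop, ∀ k ∈ Finset.range K, a (ν j) k < ε / 2 :=
      (Finset.eventually_all _).2 fun k _ =>
        ((hcol k).comp hν.tendsto_atTop).eventually_lt_const (half_pos hε)
    exact hsmall.mono fun j hj => not_lt.1 fun hlt => (hκ j).not_gt (hj _ (Finset.mem_range.2 hlt))
  obtain ⟨j, hj⟩ := ((hdiag ν κ hν hκtop).eventually_lt_const (half_pos hε)).exists
  exact (hκ j).not_gt hj

/-- The operator `T : E → c₀` is encoded by its sequence of coordinate functionals `T k`,
weak*-null since `T x ∈ c₀`, with `‖T x‖ = ⨆ k, |T k x|`. -/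
theorem stmt15 {E : Type*} [NormedAddCommGroup E] [Lattice E] [HasSolidNorm E] [IsOrderedAddMonoid E] [NormedSpace ℝ E] [CompleteSpace E]
    (hσ : SigmaDedekindComplete E) (h : WDPStar E) (T : ℕ → E →L[ℝ] ℝ)
    (hT : ∀ x : E, Tendsto (fun k => T k x) atTop (𝓝 0)) :
    ∀ x : ℕ → E, Pairwise (fun m n => ElemDisjoint (x m) (x n)) → WeaklyNull x →
      Tendsto (fun n => ⨆ k, |T k (x n)|) atTop (𝓝 0) := by
  intro x hdx hwx
  refine tendsto_ciSup_of_tendsto_diagonal (fun n => (hT (x n)).abs.bddAbove_range)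
    (fun k => by simpa using (hwx (T k)).abs) fun ν κ hν hκ => ?_
  simpa using (h.tendsto_apply_of_pairwise_disjoint hσ (fun v => (hT v).comp hκ)
    (fun i j hij => hdx (hν.injective.ne hij)) fun f => (hwx f).comp hν.tendsto_atTop).abs
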